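/- For every integer k ≥ 1, the number d_k := (−1)^k·(3/4) − (−1)^k·log 2 + (−1)^{k+1}·∑_{j=1}^k (1 − 1/2^{2j})·B_{2j}/(2j) is strictly positive, where B_{2j} denotes the 2j-th Bernoulli number. -/

import Mathlib

/-!
With `u_j = |(1 - 4^{-j}) B_{2j} / (2j)|` one has `d_0 = 3/4 - log 2` and `d_{k+1} = u_{k+1} - d_k`,
hence `d_{k+2} = d_k + (u_{k+2} - u_{k+1})`: positivity propagates in steps of two as soon as
`u` is nondecreasing. Euler's formula `|B_{2j}| = 2 (2j)! ζ(2j) / (2π)^{2j}` together with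
`1 ≤ ζ(2j) ≤ π²/6` gives `u_{j+1} / u_j ≥ 3 j (2j+1) / π⁴ > 1` for `j ≥ 4`; the remaining
cases `u_3 ≤ u_4` and `d_0, …, d_3 > 0` are numerical.
-/

open Real Finset Nat

noncomputable def bernoulliTerm (j : ℕ) : ℝ :=
  (1 - 1 / (2 : ℝ) ^ (2 * j)) * ((bernoulli (2 * j) : ℚ) : ℝ) / (2 * (j : ℝ))

-- `B_{2j}` has sign `(-1)^(j+1)`, so this is `|bernoulliTerm j|`.
noncomputable def absBernoulliTerm (j : ℕ) : ℝ :=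
  (-1) ^ (j + 1) * bernoulliTerm j

noncomputable def taylorCoeff (k : ℕ) : ℝ :=
  (-1 : ℝ) ^ k * (3 / 4) - (-1 : ℝ) ^ k * Real.log 2 +
    (-1 : ℝ) ^ (k + 1) * ∑ j ∈ Icc 1 k, bernoulliTerm j

lemma taylorCoeff_zero : taylorCoeff 0 = 3 / 4 - Real.log 2 := by
  simp [taylorCoeff]

lemma taylorCoeff_succ (k : ℕ) :
    taylorCoeff (k + 1) = absBernoulliTerm (k + 1) - taylorCoeff k := by
  simp only [taylorCoeff, absBernoulliTerm, sum_Icc_succ_top (Nat.le_add_left 1 k)]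
  ring

lemma taylorCoeff_add_two (k : ℕ) :
    taylorCoeff (k + 2) = taylorCoeff k + (absBernoulliTerm (k + 2) - absBernoulliTerm (k + 1)) := by
  rw [taylorCoeff_succ, taylorCoeff_succ]
  ring

lemma one_le_tsum_one_div_nat_pow {p : ℕ} (hp : 1 < p) : 1 ≤ ∑' n : ℕ, 1 / (n : ℝ) ^ p := by
  simpa using le_hasSum (Real.summable_one_div_nat_pow.2 hp).hasSum 1 (fun n _ => by positivity)

lemma tsum_one_div_nat_pow_le_pi_sq_div_six {p : ℕ} (hp : 2 ≤ p) :
    ∑' n : ℕ, 1 / (n : ℝ) ^ p ≤ π ^ 2 / 6 := by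
  rw [← hasSum_zeta_two.tsum_eq]
  refine Summable.tsum_le_tsum (fun n => ?_) (Real.summable_one_div_nat_pow.2 (by omega))
    hasSum_zeta_two.summable
  rcases Nat.eq_zero_or_pos n with rfl | hn
  · simp [zero_pow (by omega : p ≠ 0)]
  · gcongr
    exact_mod_cast hn

lemma absBernoulliTerm_eq_tsum {k : ℕ} (hk : k ≠ 0) :
    absBernoulliTerm k = (1 - 1 / (2 : ℝ) ^ (2 * k)) * (2 * k)! / (k * (2 * π) ^ (2 * k)) *
      ∑' n : ℕ, 1 / (n : ℝ) ^ (2 * k) := by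
  rw [(hasSum_zeta_nat hk).tsum_eq, absBernoulliTerm, bernoulliTerm]
  have h2k : (2 : ℝ) ^ (2 * k) = 2 * 2 ^ (2 * k - 1) :=
    (mul_pow_sub_one (by omega) 2).symm
  rw [mul_pow, h2k]
  field_simp

lemma absBernoulliTerm_le_succ {k : ℕ} (hk : 4 ≤ k) :
    absBernoulliTerm k ≤ absBernoulliTerm (k + 1) := by
  set c : ℝ := (2 * k)! / (k * (2 * π) ^ (2 * k)) with hc
  have hc_pos : 0 < c := by
    have : (0 : ℝ) < k := by exact_mod_cast (by omega : 0 < k)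
    positivity
  have hc_succ : ((2 * (k + 1))! : ℝ) / ((k + 1 : ℕ) * (2 * π) ^ (2 * (k + 1))) =
      c * (k * (2 * k + 1) / (2 * π ^ 2)) := by
    rw [hc, show 2 * (k + 1) = 2 * k + 1 + 1 by ring, Nat.factorial_succ, Nat.factorial_succ]
    have : (k : ℝ) ≠ 0 := by exact_mod_cast (by omega : k ≠ 0)
    push_cast
    field_simp
    ring
  have hε : 1 - 1 / (2 : ℝ) ^ (2 * k) ≤ 1 - 1 / (2 : ℝ) ^ (2 * (k + 1)) := by
    gcongr <;> norm_num
  have hε_pos : 0 < 1 - 1 / (2 : ℝ) ^ (2 * k) :=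
    sub_pos.2 ((div_lt_one (by positivity)).2 (one_lt_pow₀ one_lt_two (by omega)))
  have hπ : π ^ 2 / 6 ≤ k * (2 * k + 1) / (2 * π ^ 2) := by
    have hk' : (4 : ℝ) ≤ k := by exact_mod_cast hk
    rw [div_le_div_iff₀ (by norm_num) (by positivity)]
    have hπ2 : π ^ 2 < 9.93 := by nlinarith [pi_lt_d2, pi_pos]
    nlinarith [sq_nonneg π]
  rw [absBernoulliTerm_eq_tsum (by omega), absBernoulliTerm_eq_tsum (by omega), mul_div_assoc,
    mul_div_assoc, ← hc, hc_succ]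
  calc (1 - 1 / (2 : ℝ) ^ (2 * k)) * c * ∑' n : ℕ, 1 / (n : ℝ) ^ (2 * k)
      ≤ (1 - 1 / (2 : ℝ) ^ (2 * k)) * c * (π ^ 2 / 6) := by
        gcongr; exact tsum_one_div_nat_pow_le_pi_sq_div_six (by omega)
    _ ≤ (1 - 1 / (2 : ℝ) ^ (2 * k)) * c * (k * (2 * k + 1) / (2 * π ^ 2)) := by gcongr
    _ ≤ (1 - 1 / (2 : ℝ) ^ (2 * (k + 1))) * (c * (k * (2 * k + 1) / (2 * π ^ 2))) := by
        rw [← mul_assoc]; gcongr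
    _ ≤ (1 - 1 / (2 : ℝ) ^ (2 * (k + 1))) * (c * (k * (2 * k + 1) / (2 * π ^ 2))) *
          ∑' n : ℕ, 1 / (n : ℝ) ^ (2 * (k + 1)) :=
        le_mul_of_one_le_right (mul_pos (hε_pos.trans_le hε) (by positivity)).le
          (one_le_tsum_one_div_nat_pow (by omega))

lemma absBernoulliTerm_one : absBernoulliTerm 1 = 1 / 16 := by
  norm_num [absBernoulliTerm, bernoulliTerm, show bernoulli 2 = 1 / 6 by decide +kernel]

lemma absBernoulliTerm_two : absBernoulliTerm 2 = 1 / 128 := by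
  norm_num [absBernoulliTerm, bernoulliTerm, show bernoulli 4 = -1 / 30 by decide +kernel]

lemma absBernoulliTerm_three : absBernoulliTerm 3 = 1 / 256 := by
  norm_num [absBernoulliTerm, bernoulliTerm, show bernoulli 6 = 1 / 42 by decide +kernel]

lemma absBernoulliTerm_four : absBernoulliTerm 4 = 17 / 4096 := by
  norm_num [absBernoulliTerm, bernoulliTerm, show bernoulli 8 = -1 / 30 by decide +kernel]

lemma absBernoulliTerm_le_succ_of_three_le {k : ℕ} (hk : 3 ≤ k) :
    absBernoulliTerm k ≤ absBernoulliTerm (k + 1) := by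
  rcases hk.eq_or_lt with rfl | hk
  · norm_num [absBernoulliTerm_three, absBernoulliTerm_four]
  · exact absBernoulliTerm_le_succ hk

lemma taylorCoeff_add_two_pos (n : ℕ) : 0 < taylorCoeff (n + 2) := by
  induction n using Nat.twoStepInduction with
  | zero =>
    rw [taylorCoeff_succ, taylorCoeff_succ, taylorCoeff_zero, absBernoulliTerm_one,
      absBernoulliTerm_two]
    linarith [log_two_lt_d9]
  | one =>
    rw [taylorCoeff_succ, taylorCoeff_succ, taylorCoeff_succ, taylorCoeff_zero,
      absBernoulliTerm_one, absBernoulliTerm_two, absBernoulliTerm_three]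
    linarith [log_two_gt_d9]
  | more n hn _ =>
    rw [taylorCoeff_add_two]
    linarith [absBernoulliTerm_le_succ_of_three_le (by omega : 3 ≤ n + 3)]

theorem stmt_9 (k : ℕ) :
    0 < (-1 : ℝ) ^ k * (3 / 4) - (-1 : ℝ) ^ k * Real.log 2 +
      (-1 : ℝ) ^ (k + 1) *
        ∑ j ∈ Finset.Icc 1 k,
          (1 - 1 / (2 : ℝ) ^ (2 * j)) * ((bernoulli (2 * j) : ℚ) : ℝ) / (2 * (j : ℝ)) := by
  change 0 < taylorCoeff k
  match k with
  | 0 =>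
    rw [taylorCoeff_zero]
    linarith [log_two_lt_d9]
  | 1 =>
    rw [taylorCoeff_succ, taylorCoeff_zero, absBernoulliTerm_one]
    linarith [log_two_gt_d9]
  | n + 2 => exact taylorCoeff_add_two_pos n
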